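/- arXiv:1605.00073 — 3 statements merged into one kernel-verified Lean document; each statement's English description precedes it below -/
import Mathlib

section
/- If two elements of G_{n,p}^2 have equal images in G_{n,d}^2 under φ, then they are equal in G_{n,p}^2. -/
abbrev GenG (n : ℕ) := {p : Fin n × Fin n // p.1 < p.2}

def relsG (n : ℕ) : Set (FreeGroup (GenG n)) :=
  {r | (∃ a : GenG n, r = .of a * .of a) ∨
    (∃ a b : GenG n, ({a.1.1, a.1.2, b.1.1, b.1.2} : Finset (Fin n)).card = 4 ∧
      r = .of a * .of b * (.of b * .of a)⁻¹) ∨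
    (∃ i j k : Fin n, ∃ hij : i < j, ∃ hik : i < k, ∃ hjk : j < k,
      r = .of ⟨(i,j),hij⟩ * .of ⟨(i,k),hik⟩ * .of ⟨(j,k),hjk⟩ *
          (.of ⟨(j,k),hjk⟩ * .of ⟨(i,k),hik⟩ * .of ⟨(i,j),hij⟩)⁻¹)}

abbrev G2 (n : ℕ) := PresentedGroup (relsG n)

abbrev GenP (n : ℕ) := GenG n × Bool

def relsP (n : ℕ) : Set (FreeGroup (GenP n)) :=
  {r | (∃ a : GenP n, r = .of a * .of a) ∨
    (∃ a b : GenG n, ∃ e₁ e₂ : Bool, ({a.1.1, a.1.2, b.1.1, b.1.2} : Finset (Fin n)).card = 4 ∧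
      r = .of (a,e₁) * .of (b,e₂) * (.of (b,e₂) * .of (a,e₁))⁻¹) ∨
    (∃ i j k : Fin n, ∃ hij : i < j, ∃ hik : i < k, ∃ hjk : j < k, ∃ e₁ e₂ e₃ : Bool,
      Bool.xor e₁ (Bool.xor e₂ e₃) = false ∧
      r = .of (⟨(i,j),hij⟩,e₁) * .of (⟨(i,k),hik⟩,e₂) * .of (⟨(j,k),hjk⟩,e₃) *
          (.of (⟨(j,k),hjk⟩,e₃) * .of (⟨(i,k),hik⟩,e₂) * .of (⟨(i,j),hij⟩,e₁))⁻¹)}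

abbrev G2p (n : ℕ) := PresentedGroup (relsP n)

abbrev GenD (n : ℕ) := GenG n ⊕ Fin n

def relsD (n : ℕ) : Set (FreeGroup (GenD n)) :=
  {r | (∃ a : GenG n, r = .of (.inl a) * .of (.inl a)) ∨
    (∃ a b : GenG n, ({a.1.1, a.1.2, b.1.1, b.1.2} : Finset (Fin n)).card = 4 ∧
      r = .of (.inl a) * .of (.inl b) * (.of (.inl b) * .of (.inl a))⁻¹) ∨
    (∃ i j k : Fin n, ∃ hij : i < j, ∃ hik : i < k, ∃ hjk : j < k,
      r = .of (.inl ⟨(i,j),hij⟩) * .of (.inl ⟨(i,k),hik⟩) * .of (.inl ⟨(j,k),hjk⟩) *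
          (.of (.inl ⟨(j,k),hjk⟩) * .of (.inl ⟨(i,k),hik⟩) * .of (.inl ⟨(i,j),hij⟩))⁻¹) ∨
    (∃ i : Fin n, r = .of (.inr i) * .of (.inr i)) ∨
    (∃ i j : Fin n, i ≠ j ∧ r = .of (.inr i) * .of (.inr j) * (.of (.inr j) * .of (.inr i))⁻¹) ∨
    (∃ i j : Fin n, ∃ h : i < j,
      r = .of (.inr i) * .of (.inr j) * .of (.inl ⟨(i,j),h⟩) * .of (.inr j) * .of (.inr i) *
          (.of (.inl ⟨(i,j),h⟩))⁻¹) ∨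
    (∃ a : GenG n, ∃ k : Fin n, k ≠ a.1.1 ∧ k ≠ a.1.2 ∧
      r = .of (.inl a) * .of (.inr k) * (.of (.inr k) * .of (.inl a))⁻¹)}

abbrev G2d (n : ℕ) := PresentedGroup (relsD n)

/-!
Conjugation by `τ_S = ∏_{i ∈ S} τ_i` in `G_{n,d}^2` should send `a_{ij}^ε` to
`a_{ij}^{ε + |S ∩ {i,j}|}`. This rule (with `S` encoded by its indicator `v : Fin n → ZMod 2`)
is an action of `(ℤ/2)^n` on `G_{n,p}^2` by automorphisms: it respects the parity condition of
the triple relations because each index of `i < j < k` lies in exactly two of the pairs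
`ij, ik, jk`. In the semidirect product `G_{n,p}^2 ⋊ (ℤ/2)^n` the elements `a_{ij}^0` and the
basis vectors `e_i` satisfy the defining relations of `G_{n,d}^2`. This gives a homomorphism
from `G_{n,d}^2` to the semidirect product whose composite with `φ` is the canonical embedding
of `G_{n,p}^2`, so `φ` is injective.
-/

open PresentedGroup SemidirectProduct

theorem CharTwo.pi_add_self_eq_zero {ι R : Type*} [Semiring R] [CharP R 2] (v : ι → R) :
    v + v = 0 :=
  funext fun i => CharTwo.add_self_eq_zero (v i)

namespace G2p

variable {n : ℕ}

theorem of_mul_self (a : GenP n) : (of a : G2p n) * of a = 1 :=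
  one_of_mem (Or.inl ⟨a, rfl⟩)

theorem of_mul_comm (a b : GenG n) (e₁ e₂ : Bool)
    (h4 : ({a.1.1, a.1.2, b.1.1, b.1.2} : Finset (Fin n)).card = 4) :
    (of (a, e₁) : G2p n) * of (b, e₂) = of (b, e₂) * of (a, e₁) :=
  mul_inv_eq_one.1 (one_of_mem (Or.inr (Or.inl ⟨a, b, e₁, e₂, h4, rfl⟩)))

theorem of_triple {i j k : Fin n} (hij : i < j) (hik : i < k) (hjk : j < k) {e₁ e₂ e₃ : Bool}
    (he : Bool.xor e₁ (Bool.xor e₂ e₃) = false) :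
    (of (⟨(i, j), hij⟩, e₁) : G2p n) * of (⟨(i, k), hik⟩, e₂) * of (⟨(j, k), hjk⟩, e₃) =
      of (⟨(j, k), hjk⟩, e₃) * of (⟨(i, k), hik⟩, e₂) * of (⟨(i, j), hij⟩, e₁) :=
  mul_inv_eq_one.1 (one_of_mem (Or.inr (Or.inr ⟨i, j, k, hij, hik, hjk, e₁, e₂, e₃, he, rfl⟩)))

def twistGen (v : Fin n → ZMod 2) (x : GenP n) : GenP n :=
  (x.1, Bool.xor x.2 (decide (v x.1.1.1 ≠ v x.1.1.2)))

theorem twistGen_of_eq {v : Fin n → ZMod 2} {a : GenG n} (h : v a.1.1 = v a.1.2) (e : Bool) :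
    twistGen v (a, e) = (a, e) := by
  simp [twistGen, h]

theorem twistGen_of_ne {v : Fin n → ZMod 2} {a : GenG n} (h : v a.1.1 ≠ v a.1.2) (e : Bool) :
    twistGen v (a, e) = (a, !e) := by
  simp [twistGen, h]

theorem twistGen_add (u w : Fin n → ZMod 2) (x : GenP n) :
    twistGen (u + w) x = twistGen u (twistGen w x) := by
  have separates_add : ∀ (e : Bool) (a b c d : ZMod 2),
      Bool.xor e (decide (a + c ≠ b + d)) =
        Bool.xor (Bool.xor e (decide (c ≠ d))) (decide (a ≠ b)) := by
    decide
  exact Prod.ext rfl (separates_add _ _ _ _ _)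

theorem twistGen_zero : twistGen (0 : Fin n → ZMod 2) = id := by
  funext x
  simp [twistGen]

theorem lift_twistGen_rels (v : Fin n → ZMod 2) :
    ∀ r ∈ relsP n, FreeGroup.lift (fun x => (of (twistGen v x) : G2p n)) r = 1 := by
  rintro r (⟨a, rfl⟩ | ⟨a, b, e₁, e₂, h4, rfl⟩ | ⟨i, j, k, hij, hik, hjk, e₁, e₂, e₃, he, rfl⟩)
  · rw [map_mul, FreeGroup.lift_apply_of, of_mul_self]
  · simp only [map_mul, map_inv, FreeGroup.lift_apply_of, twistGen]
    rw [of_mul_comm a b _ _ h4, mul_inv_cancel]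
  · simp only [map_mul, map_inv, FreeGroup.lift_apply_of, twistGen]
    refine mul_inv_eq_one.2 (of_triple hij hik hjk ?_)
    have parity : ∀ (e₁ e₂ e₃ : Bool) (x y z : ZMod 2), Bool.xor e₁ (Bool.xor e₂ e₃) = false →
        Bool.xor (Bool.xor e₁ (decide (x ≠ y)))
          (Bool.xor (Bool.xor e₂ (decide (x ≠ z))) (Bool.xor e₃ (decide (y ≠ z)))) = false := by
      decide
    exact parity e₁ e₂ e₃ _ _ _ he

def twist (v : Fin n → ZMod 2) : G2p n →* G2p n :=
  toGroup (lift_twistGen_rels v)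

@[simp]
theorem twist_of (v : Fin n → ZMod 2) (x : GenP n) : twist v (of x) = of (twistGen v x) :=
  toGroup.of _

theorem twist_add (u w : Fin n → ZMod 2) : twist (u + w) = (twist u).comp (twist w) :=
  PresentedGroup.ext fun x => by simp [twistGen_add]

theorem twist_zero : twist (0 : Fin n → ZMod 2) = MonoidHom.id (G2p n) :=
  PresentedGroup.ext fun x => by simp [twistGen_zero]

theorem twist_comp_twist (v : Fin n → ZMod 2) :
    (twist v).comp (twist v) = MonoidHom.id (G2p n) := by
  rw [← twist_add, CharTwo.pi_add_self_eq_zero, twist_zero]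

def twistAction (n : ℕ) : Multiplicative (Fin n → ZMod 2) →* MulAut (G2p n) :=
  MonoidHom.mk' (fun v => (twist v.toAdd).toMulEquiv _ (twist_comp_twist _) (twist_comp_twist _))
    fun u w => MulEquiv.ext fun g => DFunLike.congr_fun (twist_add u.toAdd w.toAdd) g

end G2p

abbrev G2pSemidirect (n : ℕ) := G2p n ⋊[G2p.twistAction n] Multiplicative (Fin n → ZMod 2)

namespace G2pSemidirect

open G2p

variable {n : ℕ}

theorem inr_mul_self (v : Fin n → ZMod 2) :
    (inr (.ofAdd v) : G2pSemidirect n) * inr (.ofAdd v) = 1 := by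
  simp only [← map_mul, ← ofAdd_add, CharTwo.pi_add_self_eq_zero, ofAdd_zero, map_one]

theorem inr_mul_inl_mul_inr (v : Fin n → ZMod 2) (g : G2p n) :
    (inr (.ofAdd v) : G2pSemidirect n) * inl g * inr (.ofAdd v) = inl (twist v g) := by
  have hv : (Multiplicative.ofAdd v)⁻¹ = .ofAdd v :=
    neg_eq_of_add_eq_zero_left (CharTwo.pi_add_self_eq_zero v)
  have h := inl_aut (φ := twistAction n) (.ofAdd v) g
  rw [hv] at h
  exact h.symm

theorem inr_mul_inl_mul_inr_of_eq {v : Fin n → ZMod 2} {a : GenG n} (h : v a.1.1 = v a.1.2)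
    (e : Bool) : (inr (.ofAdd v) : G2pSemidirect n) * inl (of (a, e)) * inr (.ofAdd v) =
      inl (of (a, e)) := by
  rw [inr_mul_inl_mul_inr, twist_of, twistGen_of_eq h]

def tauGen : GenD n → G2pSemidirect n
  | .inl a => inl (of (a, false))
  | .inr k => inr (.ofAdd (Pi.single k 1))

theorem lift_tauGen_rels : ∀ r ∈ relsD n, FreeGroup.lift tauGen r = 1 := by
  rintro r (⟨a, rfl⟩ | ⟨a, b, h4, rfl⟩ | ⟨i, j, k, hij, hik, hjk, rfl⟩ | ⟨i, rfl⟩ |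
    ⟨i, j, hij, rfl⟩ | ⟨i, j, hij, rfl⟩ | ⟨a, k, hk₁, hk₂, rfl⟩) <;>
    simp only [map_mul, map_inv, FreeGroup.lift_apply_of, tauGen]
  · simp only [← map_mul, of_mul_self, map_one]
  · simp only [← map_mul, ← map_inv, of_mul_comm a b _ _ h4, mul_inv_cancel, map_one]
  · simp only [← map_mul, ← map_inv,
      of_triple hij hik hjk (e₁ := false) (e₂ := false) (e₃ := false) rfl, mul_inv_cancel, map_one]
  · exact inr_mul_self _
  · rw [mul_inv_eq_one]
    exact ((Commute.all _ _).map inr).eq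
  · have hsum : (inr (.ofAdd (Pi.single i 1)) : G2pSemidirect n) * inr (.ofAdd (Pi.single j 1)) =
        inr (.ofAdd (Pi.single i 1 + Pi.single j 1)) := (map_mul _ _ _).symm
    rw [mul_inv_eq_one, hsum, mul_assoc _ (inr _), ((Commute.all _ _).map inr).eq, hsum,
      inr_mul_inl_mul_inr_of_eq]
    simp [hij.ne, hij.ne']
  · set τ : G2pSemidirect n := inr (.ofAdd (Pi.single k 1))
    rw [mul_inv_eq_one]
    calc inl (of (a, false)) * τ = τ * inl (of (a, false)) * τ * τ := by
          rw [inr_mul_inl_mul_inr_of_eq (by simp [hk₁.symm, hk₂.symm])]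
      _ = τ * inl (of (a, false)) := by rw [mul_assoc _ τ, inr_mul_self, mul_one]

def ofG2d (n : ℕ) : G2d n →* G2pSemidirect n :=
  toGroup lift_tauGen_rels

theorem ofG2d_comp_eq_inl (φ : G2p n →* G2d n)
    (hφ : ∀ a : GenG n,
      φ (of (a, false)) = of (Sum.inl a) ∧
      φ (of (a, true)) = of (Sum.inr a.1.1) * of (Sum.inl a) * of (Sum.inr a.1.1)) :
    (ofG2d n).comp φ = inl := by
  refine PresentedGroup.ext fun ⟨a, e⟩ => ?_
  cases e with
  | false => simp [ofG2d, (hφ a).1, tauGen]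
  | true =>
    simp only [MonoidHom.comp_apply, (hφ a).2, map_mul, ofG2d, toGroup.of, tauGen,
      inr_mul_inl_mul_inr, twist_of]
    rw [twistGen_of_ne (by simp [a.2.ne']), Bool.not_false]

end G2pSemidirect

theorem phi_injective (n : ℕ) (φ : G2p n →* G2d n)
    (hφ : ∀ a : GenG n,
      φ (PresentedGroup.of (a, false)) = PresentedGroup.of (Sum.inl a) ∧
      φ (PresentedGroup.of (a, true)) =
        PresentedGroup.of (Sum.inr a.1.1) * PresentedGroup.of (Sum.inl a) *
          PresentedGroup.of (Sum.inr a.1.1)) :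
    ∀ x y : G2p n, φ x = φ y → x = y := by
  refine Function.Injective.of_comp (f := G2pSemidirect.ofG2d n) ?_
  rw [← MonoidHom.coe_comp, G2pSemidirect.ofG2d_comp_eq_inl φ hφ]
  exact inl_injective
end

section
/- The map ω from G_{n,d}^2 to the quotient Q = G_{n+1}^2 / ⟨⟨a_{i(n+1)}a_{j(n+1)} = a_{j(n+1)}a_{i(n+1)} : i ≠ j⟩⟩ defined by ω(a_{ij}) = a_{ij} and ω(τ_i) = a_{i(n+1)} is a well-defined group homomorphism. -/
def embedGen (n : ℕ) (a : GenG n) : GenG (n+1) :=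
  ⟨(a.1.1.castSucc, a.1.2.castSucc), Fin.castSucc_lt_castSucc_iff.mpr a.2⟩

def tauGen (n : ℕ) (i : Fin n) : GenG (n+1) := ⟨(i.castSucc, Fin.last n), Fin.castSucc_lt_last i⟩

def QRels (n : ℕ) : Set (G2 (n+1)) :=
  {x | ∃ i j : Fin n, i ≠ j ∧
    x = PresentedGroup.of (tauGen n i) * PresentedGroup.of (tauGen n j) *
        (PresentedGroup.of (tauGen n j) * PresentedGroup.of (tauGen n i))⁻¹}

abbrev Qgrp (n : ℕ) := G2 (n+1) ⧸ Subgroup.normalClosure (QRels n)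


/-!
Every defining relation of `G_{n,d}^2` maps to a relation holding in `Q`: those among the `a_{ij}`
and `τ_i² = 1` are relations of `G_{n+1}^2`, `[a_{ij}, τ_k] = 1` for `k ∉ {i, j}` is far
commutativity with the index `n + 1`, and `τ_iτ_j = τ_jτ_i` is imposed in `Q`. The one relation
needing an argument is `τ_iτ_j a_{ij} τ_jτ_i = a_{ij}`: once `a_{i,n+1}` and `a_{j,n+1}` commute,
the triple relation `a_{ij} a_{i,n+1} a_{j,n+1} = a_{j,n+1} a_{i,n+1} a_{ij}` says that `a_{ij}`
commutes with the involution `a_{i,n+1} a_{j,n+1}`.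
-/

theorem mul_mul_mul_mul_eq_of_triple {G : Type*} [Group G] {x y z : G} (hy : y * y = 1)
    (hz : z * z = 1) (hyz : Commute y z) (hxyz : x * y * z = z * y * x) :
    y * z * x * z * y = x :=
  calc y * z * x * z * y = z * y * x * z * y := by rw [hyz.eq]
    _ = x * y * (z * z) * y := by rw [← hxyz]; group
    _ = x := by rw [hz, mul_one, mul_assoc, hy, mul_one]

theorem Finset.card_quadruple_of_injective {α β : Type*} [DecidableEq α] [DecidableEq β]
    {f : α → β} (hf : Function.Injective f) (a b c d : α) :
    ({f a, f b, f c, f d} : Finset β).card = ({a, b, c, d} : Finset α).card := by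
  rw [← Finset.card_image_of_injective _ hf]
  simp only [Finset.image_insert, Finset.image_singleton]

namespace G2

variable {m : ℕ}

theorem of_mul_self (a : GenG m) : (PresentedGroup.of a : G2 m) * PresentedGroup.of a = 1 :=
  PresentedGroup.one_of_mem (Or.inl ⟨a, rfl⟩)

theorem of_commute {a b : GenG m}
    (h : ({a.1.1, a.1.2, b.1.1, b.1.2} : Finset (Fin m)).card = 4) :
    Commute (PresentedGroup.of a : G2 m) (PresentedGroup.of b) := by
  have := PresentedGroup.one_of_mem (rels := relsG m) (Or.inr (Or.inl ⟨a, b, h, rfl⟩))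
  rwa [map_mul, map_inv, map_mul, map_mul, mul_inv_eq_one] at this

theorem of_triple {i j k : Fin m} (hij : i < j) (hik : i < k) (hjk : j < k) :
    (PresentedGroup.of ⟨(i, j), hij⟩ : G2 m) * PresentedGroup.of ⟨(i, k), hik⟩ *
        PresentedGroup.of ⟨(j, k), hjk⟩ =
      PresentedGroup.of ⟨(j, k), hjk⟩ * PresentedGroup.of ⟨(i, k), hik⟩ *
        PresentedGroup.of ⟨(i, j), hij⟩ := by
  have := PresentedGroup.one_of_mem (rels := relsG m) (Or.inr (Or.inr ⟨i, j, k, hij, hik, hjk, rfl⟩))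
  rwa [map_mul, map_inv, mul_inv_eq_one] at this

end G2

section Omega

variable {n : ℕ}

local notation "π" => QuotientGroup.mk' (Subgroup.normalClosure (QRels n))

theorem tauGen_commute {i j : Fin n} (hij : i ≠ j) :
    Commute (π (PresentedGroup.of (tauGen n i))) (π (PresentedGroup.of (tauGen n j))) := by
  have : π _ = 1 := (QuotientGroup.eq_one_iff _).mpr
    (Subgroup.subset_normalClosure ⟨i, j, hij, rfl⟩)
  rwa [map_mul, map_inv, map_mul, map_mul, mul_inv_eq_one] at this

theorem card_embedGen_tauGen_eq_four (a : GenG n) {k : Fin n} (hk₁ : k ≠ a.1.1) (hk₂ : k ≠ a.1.2) :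
    ({(embedGen n a).1.1, (embedGen n a).1.2, (tauGen n k).1.1, (tauGen n k).1.2} :
      Finset (Fin (n + 1))).card = 4 := by
  have hlast (i : Fin n) : i.castSucc ≠ Fin.last n := (Fin.castSucc_lt_last i).ne
  simp only [embedGen, tauGen]
  rw [Finset.card_insert_of_notMem (by simp [a.2.ne, hk₁.symm, hlast]),
    Finset.card_insert_of_notMem (by simp [hk₂.symm, hlast]),
    Finset.card_insert_of_notMem (by simp [hlast]), Finset.card_singleton]

variable (n) in
def omegaGen : GenD n → Qgrp n :=
  Sum.elim (fun a => π (PresentedGroup.of (embedGen n a)))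
    (fun i => π (PresentedGroup.of (tauGen n i)))

theorem lift_omegaGen_eq_one : ∀ r ∈ relsD n, FreeGroup.lift (omegaGen n) r = 1 := by
  have sq (a : GenG (n + 1)) : π (PresentedGroup.of a) * π (PresentedGroup.of a) = 1 := by
    rw [← map_mul, G2.of_mul_self, map_one]
  rintro r (⟨a, rfl⟩ | ⟨a, b, hab, rfl⟩ | ⟨i, j, k, hij, hik, hjk, rfl⟩ | ⟨i, rfl⟩ |
    ⟨i, j, hij, rfl⟩ | ⟨i, j, hij, rfl⟩ | ⟨a, k, hk₁, hk₂, rfl⟩) <;>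
    simp only [map_mul, map_inv, FreeGroup.lift_apply_of, omegaGen, Sum.elim_inl, Sum.elim_inr,
      mul_inv_eq_one]
  · exact sq _
  · refine ((G2.of_commute ?_).map π).eq
    rwa [embedGen, embedGen, Finset.card_quadruple_of_injective (Fin.castSucc_injective n)]
  · simp only [← map_mul]
    exact congrArg π (G2.of_triple (Fin.castSucc_lt_castSucc_iff.mpr hij)
      (Fin.castSucc_lt_castSucc_iff.mpr hik) (Fin.castSucc_lt_castSucc_iff.mpr hjk))
  · exact sq _
  · exact (tauGen_commute hij).eq
  · refine mul_mul_mul_mul_eq_of_triple (sq _) (sq _) (tauGen_commute hij.ne) ?_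
    simp only [← map_mul]
    exact congrArg π (G2.of_triple (Fin.castSucc_lt_castSucc_iff.mpr hij)
      (Fin.castSucc_lt_last i) (Fin.castSucc_lt_last j))
  · exact ((G2.of_commute (card_embedGen_tauGen_eq_four a hk₁ hk₂)).map π).eq

end Omega

theorem omega_well_defined (n : ℕ) :
    ∃ ω : G2d n →* Qgrp n,
      (∀ a : GenG n, ω (PresentedGroup.of (Sum.inl a)) =
        QuotientGroup.mk (PresentedGroup.of (embedGen n a))) ∧
      (∀ i : Fin n, ω (PresentedGroup.of (Sum.inr i)) =
        QuotientGroup.mk (PresentedGroup.of (tauGen n i))) :=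
  ⟨PresentedGroup.toGroup lift_omegaGen_eq_one, fun _ => PresentedGroup.toGroup.of _,
    fun _ => PresentedGroup.toGroup.of _⟩
end

section
/- For each m ∈ {1,...,n+1}, the strand-deletion map ψ_m : G_{n+1}^2 → G_{n,d}^2 defined on generators by: ψ_m(a_{im}) = τ_i if i < m, ψ_m(a_{mj}) = τ_{j-1} if j > m, ψ_m(a_{ij}) = a_{i'j'} where i' = i if i < m and i' = i−1 if i > m (similarly for j'), whenever m ∉ {i,j}, is a well-defined group homomorphism. -/
def drop {n : ℕ} (m : Fin (n+1)) (k : Fin (n+1)) (hk : k ≠ m) : Fin n :=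
  if h : (k : ℕ) < (m : ℕ) then ⟨k, by have := m.isLt; omega⟩
  else ⟨(k : ℕ) - 1, by
    have h2 : (k : ℕ) ≠ (m : ℕ) := fun e => hk (Fin.ext e)
    have := k.isLt; omega⟩

theorem drop_lt {n : ℕ} (m : Fin (n+1)) {i j : Fin (n+1)} (hi : i ≠ m) (hj : j ≠ m) (h : i < j) :
    drop m i hi < drop m j hj := by
  have h1 : (i : ℕ) ≠ m := fun e => hi (Fin.ext e)
  have h2 : (j : ℕ) ≠ m := fun e => hj (Fin.ext e)
  have h3 : (i : ℕ) < j := h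
  have := j.isLt
  simp only [drop]
  split_ifs <;> simp only [Fin.mk_lt_mk] <;> omega

theorem succAbove_drop {n : ℕ} (m k : Fin (n+1)) (hk : k ≠ m) : m.succAbove (drop m k hk) = k := by
  have hk' : (k : ℕ) ≠ m := Fin.val_ne_of_ne hk
  unfold drop
  split_ifs with h
  · exact Fin.succAbove_of_castSucc_lt _ _ h
  · rw [Fin.succAbove_of_le_castSucc _ _ (by simp only [Fin.le_def, Fin.castSucc_mk]; omega)]
    ext
    simp only [Fin.succ_mk]
    omega

theorem drop_inj {n : ℕ} {m i j : Fin (n+1)} (hi : i ≠ m) (hj : j ≠ m) :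
    drop m i hi = drop m j hj ↔ i = j := by
  refine ⟨fun h => ?_, fun h => by subst h; rfl⟩
  rw [← succAbove_drop m i hi, ← succAbove_drop m j hj, h]

theorem drop_ne_drop {n : ℕ} {m i j : Fin (n+1)} (hi : i ≠ m) (hj : j ≠ m) (h : i ≠ j) :
    drop m i hi ≠ drop m j hj :=
  (drop_inj hi hj).not.mpr h

theorem Finset.card_eq_four_iff {α : Type*} [DecidableEq α] {a b c d : α} :
    ({a, b, c, d} : Finset α).card = 4 ↔
      a ≠ b ∧ a ≠ c ∧ a ≠ d ∧ b ≠ c ∧ b ≠ d ∧ c ≠ d := by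
  simp only [card_insert_eq_ite, mem_insert, mem_singleton, card_singleton]
  split_ifs <;> grind

theorem mul_mul_eq_mul_mul_of_commute {G : Type*} [Group G] {u v x : G} (hu : u * u = 1)
    (huv : Commute u v) (hx : Commute (u * v) x) : u * x * v = v * x * u :=
  calc u * x * v = u * (x * (u * v)) * u := by
        rw [huv.eq]; simp only [mul_assoc, hu, mul_one]
    _ = v * x * u := by rw [← hx.eq]; simp only [← mul_assoc, hu, one_mul]

namespace G2d

variable {n : ℕ}

def a (x : GenG n) : G2d n := PresentedGroup.of (.inl x)

def τ (i : Fin n) : G2d n := PresentedGroup.of (.inr i)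

theorem a_mul_self (x : GenG n) : a x * a x = 1 :=
  PresentedGroup.one_of_mem (Or.inl ⟨x, rfl⟩)

theorem τ_mul_self (i : Fin n) : τ i * τ i = 1 :=
  PresentedGroup.one_of_mem (Or.inr <| Or.inr <| Or.inr <| Or.inl ⟨i, rfl⟩)

theorem τ_inv (i : Fin n) : (τ i)⁻¹ = τ i :=
  inv_eq_of_mul_eq_one_right (τ_mul_self i)

theorem commute_a_a {x y : GenG n}
    (h : ({x.1.1, x.1.2, y.1.1, y.1.2} : Finset (Fin n)).card = 4) : Commute (a x) (a y) :=
  PresentedGroup.mk_eq_mk_of_mul_inv_mem (Or.inr <| Or.inl ⟨x, y, h, rfl⟩)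

theorem a_mul_a_mul_a {i j k : Fin n} (hij : i < j) (hik : i < k) (hjk : j < k) :
    a ⟨(i, j), hij⟩ * a ⟨(i, k), hik⟩ * a ⟨(j, k), hjk⟩ =
      a ⟨(j, k), hjk⟩ * a ⟨(i, k), hik⟩ * a ⟨(i, j), hij⟩ :=
  PresentedGroup.mk_eq_mk_of_mul_inv_mem
    (Or.inr <| Or.inr <| Or.inl ⟨i, j, k, hij, hik, hjk, rfl⟩)

theorem commute_τ_τ {i j : Fin n} (h : i ≠ j) : Commute (τ i) (τ j) :=
  PresentedGroup.mk_eq_mk_of_mul_inv_mem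
    (Or.inr <| Or.inr <| Or.inr <| Or.inr <| Or.inl ⟨i, j, h, rfl⟩)

theorem commute_τ_mul_τ_a {i j : Fin n} (h : i < j) : Commute (τ i * τ j) (a ⟨(i, j), h⟩) := by
  have hconj : τ i * τ j * a ⟨(i, j), h⟩ * τ j * τ i = a ⟨(i, j), h⟩ :=
    PresentedGroup.mk_eq_mk_of_mul_inv_mem
      (Or.inr <| Or.inr <| Or.inr <| Or.inr <| Or.inr <| Or.inl ⟨i, j, h, rfl⟩)
  refine mul_inv_eq_iff_eq_mul.mp ?_
  rw [mul_inv_rev, τ_inv, τ_inv, ← mul_assoc]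
  exact hconj

theorem commute_a_τ {x : GenG n} {k : Fin n} (h₁ : k ≠ x.1.1) (h₂ : k ≠ x.1.2) :
    Commute (a x) (τ k) :=
  PresentedGroup.mk_eq_mk_of_mul_inv_mem
    (Or.inr <| Or.inr <| Or.inr <| Or.inr <| Or.inr <| Or.inr ⟨x, k, h₁, h₂, rfl⟩)

end G2d

section DeleteStrand

open G2d

variable {n : ℕ}

def deleteStrand (m : Fin (n+1)) (x : GenG (n+1)) : G2d n :=
  if h₁ : x.1.1 = m then τ (drop m x.1.2 (h₁ ▸ x.2.ne'))
  else if h₂ : x.1.2 = m then τ (drop m x.1.1 h₁)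
  else a ⟨(drop m x.1.1 h₁, drop m x.1.2 h₂), drop_lt m h₁ h₂ x.2⟩

variable {m : Fin (n+1)}

theorem deleteStrand_of_snd_eq {i j : Fin (n+1)} (h : i < j) (hi : i ≠ m) (hj : j = m) :
    deleteStrand m ⟨(i, j), h⟩ = τ (drop m i hi) := by
  rw [deleteStrand, dif_neg hi, dif_pos hj]

theorem deleteStrand_of_fst_eq {i j : Fin (n+1)} (h : i < j) (hi : i = m) (hj : j ≠ m) :
    deleteStrand m ⟨(i, j), h⟩ = τ (drop m j hj) := by
  rw [deleteStrand, dif_pos hi]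

theorem deleteStrand_of_ne {i j : Fin (n+1)} (h : i < j) (hi : i ≠ m) (hj : j ≠ m) :
    deleteStrand m ⟨(i, j), h⟩ = a ⟨(drop m i hi, drop m j hj), drop_lt m hi hj h⟩ := by
  rw [deleteStrand, dif_neg hi, dif_neg hj]

theorem deleteStrand_mul_self (x : GenG (n+1)) : deleteStrand m x * deleteStrand m x = 1 := by
  unfold deleteStrand
  split_ifs
  exacts [τ_mul_self _, τ_mul_self _, a_mul_self _]

theorem commute_τ_deleteStrand {k i j : Fin (n+1)} (h : i < j) (hk : k ≠ m) (hi : i ≠ m)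
    (hj : j ≠ m) (hki : k ≠ i) (hkj : k ≠ j) :
    Commute (τ (drop m k hk)) (deleteStrand m ⟨(i, j), h⟩) := by
  rw [deleteStrand_of_ne h hi hj]
  exact (commute_a_τ (drop_ne_drop hk hi hki) (drop_ne_drop hk hj hkj)).symm

theorem commute_deleteStrand {x y : GenG (n+1)}
    (hxy : ({x.1.1, x.1.2, y.1.1, y.1.2} : Finset (Fin (n+1))).card = 4) :
    Commute (deleteStrand m x) (deleteStrand m y) := by
  obtain ⟨⟨i, j⟩, hij⟩ := x
  obtain ⟨⟨k, l⟩, hkl⟩ := y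
  obtain ⟨-, hik, hil, hjk, hjl, -⟩ := Finset.card_eq_four_iff.mp hxy
  by_cases hi : i = m
  · subst hi
    rw [deleteStrand_of_fst_eq hij rfl hij.ne']
    exact commute_τ_deleteStrand hkl _ hik.symm hil.symm hjk hjl
  by_cases hj : j = m
  · subst hj
    rw [deleteStrand_of_snd_eq hij hi rfl]
    exact commute_τ_deleteStrand hkl _ hjk.symm hjl.symm hik hil
  by_cases hk : k = m
  · subst hk
    rw [deleteStrand_of_fst_eq hkl rfl hkl.ne']
    exact (commute_τ_deleteStrand hij _ hik hjk hil.symm hjl.symm).symm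
  by_cases hl : l = m
  · subst hl
    rw [deleteStrand_of_snd_eq hkl hk rfl]
    exact (commute_τ_deleteStrand hij _ hil hjl hik.symm hjk.symm).symm
  rw [deleteStrand_of_ne hij hi hj, deleteStrand_of_ne hkl hk hl]
  refine commute_a_a (Finset.card_eq_four_iff.mpr ?_)
  simpa only [ne_eq, drop_inj] using Finset.card_eq_four_iff.mp hxy

theorem deleteStrand_triple {i j k : Fin (n+1)} (hij : i < j) (hik : i < k) (hjk : j < k) :
    deleteStrand m ⟨(i, j), hij⟩ * deleteStrand m ⟨(i, k), hik⟩ *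
        deleteStrand m ⟨(j, k), hjk⟩ =
      deleteStrand m ⟨(j, k), hjk⟩ * deleteStrand m ⟨(i, k), hik⟩ *
        deleteStrand m ⟨(i, j), hij⟩ := by
  by_cases hi : i = m
  · subst hi
    rw [deleteStrand_of_fst_eq hij rfl hij.ne', deleteStrand_of_fst_eq hik rfl hik.ne',
      deleteStrand_of_ne hjk hij.ne' hik.ne', (commute_τ_mul_τ_a _).eq, mul_assoc,
      (commute_τ_τ _).eq, ← mul_assoc]
    exact drop_ne_drop _ _ hjk.ne
  by_cases hj : j = m
  · subst hj
    rw [deleteStrand_of_snd_eq hij hi rfl, deleteStrand_of_ne hik hi hjk.ne',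
      deleteStrand_of_fst_eq hjk rfl hjk.ne']
    exact mul_mul_eq_mul_mul_of_commute (τ_mul_self _) (commute_τ_τ (drop_ne_drop _ _ hik.ne))
      (commute_τ_mul_τ_a _)
  by_cases hk : k = m
  · subst hk
    rw [deleteStrand_of_ne hij hi hj, deleteStrand_of_snd_eq hik hi rfl,
      deleteStrand_of_snd_eq hjk hj rfl, mul_assoc, ← (commute_τ_mul_τ_a _).eq,
      (commute_τ_τ _).eq]
    exact drop_ne_drop _ _ hij.ne
  rw [deleteStrand_of_ne hij hi hj, deleteStrand_of_ne hik hi hk, deleteStrand_of_ne hjk hj hk]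
  exact a_mul_a_mul_a _ _ _

theorem deleteStrand_rels : ∀ r ∈ relsG (n+1), FreeGroup.lift (deleteStrand m) r = 1 := by
  rintro r (⟨x, rfl⟩ | ⟨x, y, hxy, rfl⟩ | ⟨i, j, k, hij, hik, hjk, rfl⟩) <;>
    simp only [map_mul, map_inv, FreeGroup.lift_apply_of, mul_inv_eq_one]
  exacts [deleteStrand_mul_self x, commute_deleteStrand hxy, deleteStrand_triple hij hik hjk]

end DeleteStrand

theorem psi_m_well_defined (n : ℕ) (m : Fin (n+1)) :
    ∃ ψ : G2 (n+1) →* G2d n,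
      ∀ (i j : Fin (n+1)) (h : i < j),
        (∀ hi : i ≠ m, j = m →
          ψ (PresentedGroup.of ⟨(i,j),h⟩) = PresentedGroup.of (Sum.inr (drop m i hi))) ∧
        (∀ hj : j ≠ m, i = m →
          ψ (PresentedGroup.of ⟨(i,j),h⟩) = PresentedGroup.of (Sum.inr (drop m j hj))) ∧
        (∀ (hi : i ≠ m) (hj : j ≠ m),
          ψ (PresentedGroup.of ⟨(i,j),h⟩) =
            PresentedGroup.of (Sum.inl ⟨(drop m i hi, drop m j hj), drop_lt m hi hj h⟩)) :=
  ⟨PresentedGroup.toGroup deleteStrand_rels, fun i j h =>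
    ⟨fun hi hj => by rw [PresentedGroup.toGroup.of, deleteStrand_of_snd_eq h hi hj]; rfl,
     fun hj hi => by rw [PresentedGroup.toGroup.of, deleteStrand_of_fst_eq h hi hj]; rfl,
     fun hi hj => by rw [PresentedGroup.toGroup.of, deleteStrand_of_ne h hi hj]; rfl⟩⟩
end
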